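/- There exist a C*-algebra A, a Hilbert A-module H, and an adjointable operator T₁ ∈ L(H) with T₁² = 0 but w(T₁) ≠ (1/2)‖T₁‖, where w is the numerical radius. (Concretely: A = H = M₂(ℂ), T₁ = left multiplication by the matrix [[0,0],[1,0]].) -/

import Mathlib

open scoped ComplexOrder RightActions

noncomputable section

/-- The December 2024 Mathlib `CStarModule` (right Hilbert module: `SMul Aᵐᵒᵖ E`,
`inner x (y <• a) = inner x y * a`), restored under a new name. -/
class RightCStarModule (A E : Type*) [NonUnitalSemiring A] [StarRing A]
    [Module ℂ A] [AddCommGroup E] [Module ℂ E] [PartialOrder A] [SMul Aᵐᵒᵖ E] [Norm A] [Norm E]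
    extends Inner A E where
  inner_add_right {x} {y} {z} : inner x (y + z) = inner x y + inner x z
  inner_self_nonneg {x} : 0 ≤ inner x x
  inner_self {x} : inner x x = 0 ↔ x = 0
  inner_op_smul_right {a : A} {x y : E} : inner x (y <• a) = inner x y * a
  inner_smul_right_complex {z : ℂ} {x} {y} : inner x (z • y) = z • inner x y
  star_inner x y : star (inner x y) = inner y x
  norm_eq_sqrt_norm_inner_self x : ‖x‖ = √‖inner x x‖

/-- The numerical radius `w(T)` of a Hilbert C*-module operator. -/
def numRadius (A : Type*) {H : Type*} [NonUnitalCStarAlgebra A] [PartialOrder A]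
    [StarOrderedRing A] [NormedAddCommGroup H] [NormedSpace ℂ H] [SMul Aᵐᵒᵖ H] [RightCStarModule A H]
    (T : H →L[ℂ] H) : ℝ :=
  sSup {r : ℝ | ∃ x : H, ‖x‖ = 1 ∧ r = ‖(inner A (T x) x : A)‖}

/-- A witness consisting of a C*-algebra `A`, a Hilbert `A`-module `H` and an adjointable
operator `T₁` on `H` with `T₁² = 0` but `w(T₁) ≠ (1/2)‖T₁‖`. -/
structure SqZeroCounterexample where
  A : Type
  [iA : NonUnitalCStarAlgebra A]
  [iP : PartialOrder A]
  [iS : StarOrderedRing A]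
  H : Type
  [iN : NormedAddCommGroup H]
  [iNS : NormedSpace ℂ H]
  [iM : SMul Aᵐᵒᵖ H]
  [iCM : RightCStarModule A H]
  T₁ : H →L[ℂ] H
  T₁adj : H →L[ℂ] H
  adj : ∀ x y : H, (inner A (T₁ x) y : A) = inner A x (T₁adj y)
  sq_zero : T₁ ∘L T₁ = 0
  ne : numRadius A T₁ ≠ (1 / 2 : ℝ) * ‖T₁‖

section Aux

instance myRCSM (B : Type*) [CStarAlgebra B] [PartialOrder B] [StarOrderedRing B] :
    RightCStarModule B B where
  inner x y := star x * y
  inner_add_right := mul_add _ _ _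
  inner_self_nonneg := star_mul_self_nonneg _
  inner_self := CStarRing.star_mul_self_eq_zero_iff _
  inner_op_smul_right := (mul_assoc _ _ _).symm
  inner_smul_right_complex := mul_smul_comm _ _ _
  star_inner x y := by simp [star_mul]
  norm_eq_sqrt_norm_inner_self x := by
    rw [CStarRing.norm_star_mul_self, Real.sqrt_mul_self (norm_nonneg _)]

lemma myinner_def (B : Type*) [CStarAlgebra B] [PartialOrder B] [StarOrderedRing B] (x y : B) :
    (inner B x y : B) = star x * y := rfl

abbrev myE : Type := EuclideanSpace ℂ (Fin 2)

abbrev myA : Type := myE →L[ℂ] myE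

/-- The nilpotent operator `x ↦ ⟪e₀, x⟫ • e₁`. -/
def mye : myA :=
  (innerSL ℂ (EuclideanSpace.single (0 : Fin 2) (1 : ℂ))).smulRight
    (EuclideanSpace.single (1 : Fin 2) (1 : ℂ))

lemma mye_apply (x : myE) : mye x = (inner ℂ (EuclideanSpace.single (0 : Fin 2) (1 : ℂ)) x : ℂ) •
    EuclideanSpace.single (1 : Fin 2) (1 : ℂ) := rfl

lemma mye_sq : mye * mye = 0 := by
  ext x i
  simp [ContinuousLinearMap.mul_apply, mye_apply, EuclideanSpace.inner_single_left,
    EuclideanSpace.inner_single_right, EuclideanSpace.single_apply]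

lemma mye_ne_zero : mye ≠ 0 := by
  intro h
  have := congrFun (congrArg DFunLike.coe h) (EuclideanSpace.single (0 : Fin 2) (1 : ℂ))
  rw [mye_apply] at this
  simp [EuclideanSpace.inner_single_left] at this

end Aux

/-- There exist a C*-algebra `A`, a Hilbert `A`-module `H`, and `T₁ ∈ L(H)` with `T₁² = 0`
but `w(T₁) ≠ (1/2)‖T₁‖`. -/
theorem exists_sq_zero_numRadius_ne_half_norm : Nonempty SqZeroCounterexample := by
  refine ⟨{ A := myA, H := myA,
            T₁ := ContinuousLinearMap.mul ℂ myA mye,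
            T₁adj := ContinuousLinearMap.mul ℂ myA (star mye),
            adj := ?_, sq_zero := ?_, ne := ?_ }⟩
  · intro x y
    simp only [ContinuousLinearMap.mul_apply', myinner_def, star_mul]
    rw [mul_assoc]
  · ext a
    simp [ContinuousLinearMap.mul_apply', ← mul_assoc, mye_sq]
  · -- the numerical radius is at least ‖mye‖, but (1/2)‖T₁‖ ≤ (1/2)‖mye‖ < ‖mye‖
    set T : myA →L[ℂ] myA := ContinuousLinearMap.mul ℂ myA mye with hT
    have hbdd : BddAbove {r : ℝ | ∃ x : myA, ‖x‖ = 1 ∧ r = ‖(inner myA (T x) x : myA)‖} := by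
      refine ⟨‖T‖, ?_⟩
      rintro r ⟨x, hx, rfl⟩
      calc ‖(inner myA (T x) x : myA)‖ ≤ ‖T x‖ * ‖x‖ := by rw [myinner_def, ← norm_star (T x)]; exact norm_mul_le _ _
        _ ≤ (‖T‖ * ‖x‖) * ‖x‖ := by gcongr; exact T.le_opNorm x
        _ = ‖T‖ := by rw [hx]; ring
    have hmem : ‖mye‖ ∈ {r : ℝ | ∃ x : myA, ‖x‖ = 1 ∧ r = ‖(inner myA (T x) x : myA)‖} := by
      refine ⟨1, norm_one, ?_⟩
      simp only [hT, ContinuousLinearMap.mul_apply', mul_one, myinner_def]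
      exact (norm_star mye).symm
    have hw : ‖mye‖ ≤ numRadius myA T := le_csSup hbdd hmem
    have hTle : ‖T‖ ≤ ‖mye‖ := by
      exact ContinuousLinearMap.opNorm_mul_apply_le ℂ myA mye
    have hpos : (0 : ℝ) < ‖mye‖ := norm_pos_iff.mpr mye_ne_zero
    intro h
    have : numRadius myA T ≤ (1 / 2 : ℝ) * ‖mye‖ := by
      rw [h]; gcongr
    linarith

end
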